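/- arXiv:math/9902139 — 3 statements merged into one kernel-verified Lean document; each statement's English description precedes it below -/
import Mathlib

section
/- If M and L are ordered partitions of {1,…,n} with block sizes (k_0,…,k_{N−1}) and M ≠ L, then D(ζ|ζ|1)_{M,L} = 0; that is, specializing q = 1 and ξ_a = ζ_a for all a makes every off-diagonal entry of the matrix (D_{M,L}) vanish. -/
open scoped BigOperators

/-- A sequence `M : Fin n → Fin N` encodes an ordered partition `(M_0,…,M_{N-1})` of
`{1,…,n}` via `M_r = {a : M a = r}`; it has block sizes `(k_0,…,k_{N-1})` iff
`#{a : M a = r} = k r` for all `r`. -/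
def hasContent {n N : ℕ} (M : Fin n → Fin N) (k : Fin N → ℕ) : Prop :=
  ∀ r : Fin N, (Finset.univ.filter fun a => M a = r).card = k r

instance {n N : ℕ} (M : Fin n → Fin N) (k : Fin N → ℕ) : Decidable (hasContent M k) := by
  unfold hasContent; infer_instance

/-- `D(ζ|ξ|q)_{M,L}` with `z_a = ζ_a^N`, `u_a = ξ_a^N`. -/
noncomputable def Dmat (N n : ℕ) (q : ℂ) (ζ ξ : Fin n → ℂ) (M L : Fin n → Fin N) : ℂ :=
  (∏ r : Fin N, ∏ l : Fin N,
      if r < l then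
        (∏ a : Fin n, ∏ b : Fin n,
            if M a = r ∧ L b = l then ζ a ^ N - q * ξ b ^ N else 1)
          * ∏ a : Fin n, ∏ b : Fin n,
              if L a = r ∧ M b = l then ξ a ^ N - q * ζ b ^ N else 1
      else 1)
    * ∑ j : Fin N,
        (∏ a : Fin n, (ζ a / ξ a) ^ (j : ℕ))
          * ∏ r : Fin N,
              if r < j then
                (∏ a : Fin n, if M a = r then (ζ a ^ N)⁻¹ else 1)
                  * ∏ a : Fin n, if L a = r then ξ a ^ N else 1
              else 1

/-- at `q = 1` and `ξ = ζ`, the off-diagonal entries of the matrix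
`(D(ζ|ζ|1)_{M,L})` vanish. -/
theorem Dmat_off_diagonal_vanishes (N n : ℕ) (hN : 2 ≤ N) (hn : 1 ≤ n)
    (k : Fin N → ℕ) (hk : ∑ r : Fin N, k r = n)
    (ζ : Fin n → ℂ) (hζ : ∀ a, ζ a ≠ 0)
    (M L : Fin n → Fin N) (hM : hasContent M k) (hL : hasContent L k)
    (hML : M ≠ L) :
    Dmat N n 1 ζ ζ M L = 0 := by
  obtain ⟨a, ha⟩ := Function.ne_iff.mp hML
  unfold Dmat
  rcases lt_or_gt_of_ne ha with h | h
  · rw [Finset.prod_eq_zero (Finset.mem_univ (M a)), zero_mul]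
    rw [Finset.prod_eq_zero (Finset.mem_univ (L a))]
    rw [if_pos h]
    rw [Finset.prod_eq_zero (Finset.mem_univ a), zero_mul]
    rw [Finset.prod_eq_zero (Finset.mem_univ a)]
    simp
  · rw [Finset.prod_eq_zero (Finset.mem_univ (L a)), zero_mul]
    rw [Finset.prod_eq_zero (Finset.mem_univ (M a))]
    rw [if_pos h]
    rw [mul_eq_zero]; right
    rw [Finset.prod_eq_zero (Finset.mem_univ a)]
    rw [Finset.prod_eq_zero (Finset.mem_univ a)]
    simp
end

section
/- Specializing q = 1 and ξ_a = ζ_a for all a, the matrix (D(ζ|ζ|1)_{M,L}), indexed by ordered partitions M, L of {1,…,n} with block sizes (k_0,…,k_{N−1}) (rows and columns in the same fixed order), is diagonal with D(ζ|ζ|1)_{M,M} = N · ∏_{0≤r<l≤N−1} ∏_{a∈M_r, b∈M_l} (z_a − z_b)², and hence det( D(ζ|ζ|1)_{M,L} )_{M,L} = N^{P} · ∏_{M} ∏_{0≤r<l≤N−1} ∏_{a∈M_r, b∈M_l} (z_a − z_b)², where P = n!/(k_0! ⋯ k_{N−1}!) is the number of such ordered partitions. -/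
open scoped BigOperators

lemma sigma_mk_val_eq {N : ℕ} {k : Fin N → ℕ} (x : Σ r : Fin N, Fin (k r)) {j : Fin N}
    (h : x.1 = j) (hv : (x.2 : ℕ) < k j) :
    (⟨j, ⟨(x.2 : ℕ), hv⟩⟩ : Σ r : Fin N, Fin (k r)) = x := by
  obtain ⟨i, y⟩ := x
  dsimp at h
  subst h
  simp

/-- fiber of `Sigma.fst` in `Σ r, Fin (k r)` over `r` is `Fin (k r)`. -/
def fiberFinEquiv {N : ℕ} (k : Fin N → ℕ) (r : Fin N) :
    {t : Σ i : Fin N, Fin (k i) // t.1 = r} ≃ Fin (k r) where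
  toFun t := ⟨(t.1.2 : ℕ), lt_of_lt_of_eq t.1.2.isLt (congrArg k t.2)⟩
  invFun x := ⟨⟨r, x⟩, rfl⟩
  left_inv t := Subtype.ext (sigma_mk_val_eq t.1 t.2 _)
  right_inv x := by simp

lemma content_of_equiv {N n : ℕ} (k : Fin N → ℕ) (e : Fin n ≃ (Σ r : Fin N, Fin (k r))) :
    hasContent (fun a => (e a).1) k := by
  intro r
  rw [← Fintype.card_subtype]
  rw [Fintype.card_congr ((Equiv.subtypeEquiv e (fun a => Iff.rfl)).trans (fiberFinEquiv k r))]
  simp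

lemma card_fiber {N n : ℕ} (k : Fin N → ℕ) (M : Fin n → Fin N) :
    Fintype.card {e : Fin n ≃ (Σ r : Fin N, Fin (k r)) // ∀ a, (e a).1 = M a}
      = Fintype.card (∀ r : Fin N, ({a : Fin n // M a = r} ≃ Fin (k r))) := by
  classical
  let Φ : (∀ r : Fin N, ({a : Fin n // M a = r} ≃ Fin (k r))) →
      {e : Fin n ≃ (Σ r : Fin N, Fin (k r)) // ∀ a, (e a).1 = M a} :=
    fun f => ⟨((Equiv.sigmaFiberEquiv M).symm).trans (Equiv.sigmaCongrRight f), fun a => rfl⟩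
  have hΦ : Function.Bijective Φ := by
    constructor
    · intro f g hfg
      have h : ∀ a : Fin n, (⟨M a, f (M a) ⟨a, rfl⟩⟩ : Σ r : Fin N, Fin (k r))
          = ⟨M a, g (M a) ⟨a, rfl⟩⟩ := by
        intro a
        have := congrArg (fun z => z.1.toFun a) hfg
        exact this
      funext r
      ext ⟨a, ha⟩
      subst ha
      have := h a
      rw [Sigma.mk.inj_iff] at this
      exact Fin.val_eq_of_eq (eq_of_heq this.2)
    · rintro ⟨e, he⟩
      have hbij : ∀ r : Fin N, Function.Bijective
          (fun a : {a : Fin n // M a = r} =>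
            (⟨((e a.1).2 : ℕ), lt_of_lt_of_eq (e a.1).2.isLt (congrArg k ((he a.1).trans a.2))⟩ : Fin (k r))) := by
        intro r
        constructor
        · intro a₁ a₂ h12
          have hv : ((e a₁.1).2 : ℕ) = ((e a₂.1).2 : ℕ) := congrArg Fin.val h12
          have h1 : e a₁.1 = e a₂.1 := by
            rw [← sigma_mk_val_eq (e a₁.1) ((he a₁.1).trans a₁.2)
                (lt_of_lt_of_eq (e a₁.1).2.isLt (congrArg k ((he a₁.1).trans a₁.2))),
              ← sigma_mk_val_eq (e a₂.1) ((he a₂.1).trans a₂.2)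
                (lt_of_lt_of_eq (e a₂.1).2.isLt (congrArg k ((he a₂.1).trans a₂.2)))]
            simp [hv]
          exact Subtype.ext (e.injective h1)
        · intro x
          refine ⟨⟨e.symm ⟨r, x⟩, ?_⟩, ?_⟩
          · have := he (e.symm ⟨r, x⟩)
            rw [Equiv.apply_symm_apply] at this
            exact this.symm
          · apply Fin.ext
            exact congrArg (fun s : Σ i : Fin N, Fin (k i) => (s.2 : ℕ))
              (e.apply_symm_apply ⟨r, x⟩)
      refine ⟨fun r => Equiv.ofBijective _ (hbij r), ?_⟩
      apply Subtype.ext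
      apply Equiv.ext
      intro a
      show (⟨M a, _⟩ : Σ r : Fin N, Fin (k r)) = e a
      exact sigma_mk_val_eq (e a) (he a) _
  exact (Fintype.card_of_bijective hΦ).symm

lemma card_content (N n : ℕ) (k : Fin N → ℕ) (hk : ∑ r : Fin N, k r = n) :
    Fintype.card {M : Fin n → Fin N // hasContent M k} * ∏ r : Fin N, (k r).factorial
      = n.factorial := by
  classical
  set T := (Σ r : Fin N, Fin (k r)) with hT
  have hTc : Fintype.card T = n := by simp [hT, hk]
  have h1 : Fintype.card (Fin n ≃ T) = n.factorial := by
    rw [Fintype.card_equiv (Fintype.equivOfCardEq (by simp [hTc]))]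
    simp
  let F : (Fin n ≃ T) → {M : Fin n → Fin N // hasContent M k} :=
    fun e => ⟨fun a => (e a).1, content_of_equiv k e⟩
  have h2 : Fintype.card (Fin n ≃ T)
      = ∑ Mp : {M : Fin n → Fin N // hasContent M k},
          Fintype.card {e : Fin n ≃ T // F e = Mp} := by
    rw [← Fintype.card_congr (Equiv.sigmaFiberEquiv F)]
    simp [Fintype.card_sigma]
  have h3 : ∀ Mp : {M : Fin n → Fin N // hasContent M k},
      Fintype.card {e : Fin n ≃ T // F e = Mp} = ∏ r : Fin N, (k r).factorial := by
    intro Mp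
    have heq : Fintype.card {e : Fin n ≃ T // F e = Mp}
        = Fintype.card {e : Fin n ≃ T // ∀ a, (e a).1 = Mp.1 a} := by
      apply Fintype.card_congr
      apply Equiv.subtypeEquivRight
      intro e
      rw [Subtype.ext_iff]
      exact funext_iff
    rw [heq, card_fiber k Mp.1, Fintype.card_pi]
    apply Finset.prod_congr rfl
    intro r _
    have hcard : Fintype.card {a : Fin n // Mp.1 a = r} = k r := by
      rw [Fintype.card_subtype]; exact Mp.2 r
    rw [Fintype.card_equiv (Fintype.equivOfCardEq (by simp [hcard])), hcard]
  rw [h1] at h2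
  rw [h2]
  rw [Finset.sum_congr rfl (fun Mp _ => h3 Mp), Finset.sum_const, Finset.card_univ, smul_eq_mul]

/-- at `q = 1` and `ξ = ζ` the matrix `(D(ζ|ζ|1)_{M,L})` is diagonal with
`D_{MM} = N ∏_{r<l} ∏_{a∈M_r,b∈M_l} (z_a - z_b)²`, and hence its determinant equals
`N^P ∏_M ∏_{r<l} ∏_{a∈M_r,b∈M_l} (z_a - z_b)²` where `P = n!/(k_0!⋯k_{N-1}!)` is the
number of ordered partitions with block sizes `(k_0,…,k_{N-1})`. -/
theorem Dmat_diagonal_det (N n : ℕ) (hN : 2 ≤ N) (hn : 1 ≤ n)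
    (k : Fin N → ℕ) (hk : ∑ r : Fin N, k r = n)
    (ζ : Fin n → ℂ) (hζ : ∀ a, ζ a ≠ 0) :
    (∀ M L : Fin n → Fin N, hasContent M k → hasContent L k → M ≠ L →
        Dmat N n 1 ζ ζ M L = 0)
    ∧ (∀ M : Fin n → Fin N, hasContent M k →
        Dmat N n 1 ζ ζ M M
          = (N : ℂ) * ∏ r : Fin N, ∏ l : Fin N,
              if r < l then
                ∏ a : Fin n, ∏ b : Fin n,
                  if M a = r ∧ M b = l then (ζ a ^ N - ζ b ^ N) ^ 2 else 1
              else 1)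
    ∧ Matrix.det
          (Matrix.of fun Mp Lp : {M : Fin n → Fin N // hasContent M k} =>
            Dmat N n 1 ζ ζ Mp.1 Lp.1)
        = (N : ℂ) ^ (Nat.factorial n / ∏ r : Fin N, Nat.factorial (k r))
          * ∏ Mp : {M : Fin n → Fin N // hasContent M k},
              ∏ r : Fin N, ∏ l : Fin N,
                if r < l then
                  ∏ a : Fin n, ∏ b : Fin n,
                    if Mp.1 a = r ∧ Mp.1 b = l then (ζ a ^ N - ζ b ^ N) ^ 2 else 1
                else 1 := by
  classical
  have h1 : ∀ M L : Fin n → Fin N, hasContent M k → hasContent L k → M ≠ L →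
      Dmat N n 1 ζ ζ M L = 0 := by
    intro M L _ _ hne
    obtain ⟨a, ha⟩ := Function.ne_iff.mp hne
    unfold Dmat
    rw [mul_eq_zero]; left
    rcases lt_or_gt_of_ne ha with h | h
    · apply Finset.prod_eq_zero (Finset.mem_univ (M a))
      apply Finset.prod_eq_zero (Finset.mem_univ (L a))
      rw [if_pos h, mul_eq_zero]; left
      apply Finset.prod_eq_zero (Finset.mem_univ a)
      apply Finset.prod_eq_zero (Finset.mem_univ a)
      rw [if_pos ⟨rfl, rfl⟩]; ring
    · apply Finset.prod_eq_zero (Finset.mem_univ (L a))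
      apply Finset.prod_eq_zero (Finset.mem_univ (M a))
      rw [if_pos h, mul_eq_zero]; right
      apply Finset.prod_eq_zero (Finset.mem_univ a)
      apply Finset.prod_eq_zero (Finset.mem_univ a)
      rw [if_pos ⟨rfl, rfl⟩]; ring
  have h2 : ∀ M : Fin n → Fin N, hasContent M k →
      Dmat N n 1 ζ ζ M M
        = (N : ℂ) * ∏ r : Fin N, ∏ l : Fin N,
            if r < l then
              ∏ a : Fin n, ∏ b : Fin n,
                if M a = r ∧ M b = l then (ζ a ^ N - ζ b ^ N) ^ 2 else 1
            else 1 := by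
    intro M _
    unfold Dmat
    have hS : (∑ j : Fin N,
        (∏ a : Fin n, (ζ a / ζ a) ^ (j : ℕ))
          * ∏ r : Fin N,
              if r < j then
                (∏ a : Fin n, if M a = r then (ζ a ^ N)⁻¹ else 1)
                  * ∏ a : Fin n, if M a = r then ζ a ^ N else 1
              else 1) = (N : ℂ) := by
      have hterm : ∀ j : Fin N,
          (∏ a : Fin n, (ζ a / ζ a) ^ (j : ℕ))
            * (∏ r : Fin N,
                if r < j then
                  (∏ a : Fin n, if M a = r then (ζ a ^ N)⁻¹ else 1)
                    * ∏ a : Fin n, if M a = r then ζ a ^ N else 1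
                else 1) = 1 := by
        intro j
        have ha : (∏ a : Fin n, (ζ a / ζ a) ^ (j : ℕ)) = 1 :=
          Finset.prod_eq_one fun a _ => by rw [div_self (hζ a), one_pow]
        have hb : (∏ r : Fin N,
            if r < j then
              (∏ a : Fin n, if M a = r then (ζ a ^ N)⁻¹ else 1)
                * ∏ a : Fin n, if M a = r then ζ a ^ N else 1
            else 1) = 1 := by
          refine Finset.prod_eq_one fun r _ => ?_
          by_cases h : r < j
          · rw [if_pos h, ← Finset.prod_mul_distrib]
            refine Finset.prod_eq_one fun a _ => ?_
            by_cases h2 : M a = r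
            · rw [if_pos h2, if_pos h2, inv_mul_cancel₀ (pow_ne_zero _ (hζ a))]
            · rw [if_neg h2, if_neg h2, one_mul]
          · rw [if_neg h]
        rw [ha, hb, one_mul]
      rw [Finset.sum_congr rfl (fun j _ => hterm j), Finset.sum_const, Finset.card_univ,
        Fintype.card_fin, nsmul_eq_mul, mul_one]
    rw [hS, mul_comm]
    congr 1
    refine Finset.prod_congr rfl fun r _ => Finset.prod_congr rfl fun l _ => ?_
    by_cases hrl : r < l
    · rw [if_pos hrl, if_pos hrl, ← Finset.prod_mul_distrib]
      refine Finset.prod_congr rfl fun a _ => ?_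
      rw [← Finset.prod_mul_distrib]
      refine Finset.prod_congr rfl fun b _ => ?_
      by_cases h : M a = r ∧ M b = l
      · rw [if_pos h, if_pos h]; ring
      · rw [if_neg h, if_neg h, one_mul]
    · rw [if_neg hrl, if_neg hrl]
  refine ⟨h1, h2, ?_⟩
  have hmat : (Matrix.of fun Mp Lp : {M : Fin n → Fin N // hasContent M k} =>
        Dmat N n 1 ζ ζ Mp.1 Lp.1)
      = Matrix.diagonal (fun Mp : {M : Fin n → Fin N // hasContent M k} =>
          (N : ℂ) * ∏ r : Fin N, ∏ l : Fin N,
            if r < l then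
              ∏ a : Fin n, ∏ b : Fin n,
                if Mp.1 a = r ∧ Mp.1 b = l then (ζ a ^ N - ζ b ^ N) ^ 2 else 1
            else 1) := by
    ext Mp Lp
    by_cases h : Mp = Lp
    · subst h
      rw [Matrix.of_apply, Matrix.diagonal_apply_eq]
      exact h2 Mp.1 Mp.2
    · rw [Matrix.of_apply, Matrix.diagonal_apply_ne _ h]
      exact h1 Mp.1 Lp.1 Mp.2 Lp.2 (fun hh => h (Subtype.ext hh))
  rw [hmat, Matrix.det_diagonal, Finset.prod_mul_distrib, Finset.prod_const, Finset.card_univ]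
  congr 2
  have hpos : 0 < ∏ r : Fin N, (k r).factorial :=
    Finset.prod_pos fun r _ => Nat.factorial_pos _
  rw [← card_content N n k hk, Nat.mul_div_cancel _ hpos]
end

section
/- For all nonzero complex ζ_1,…,ζ_n, ξ_1,…,ξ_n and q such that z_a − q² z_b ≠ 0 and u_a − q² u_b ≠ 0 for all a ≠ b, the determinant of the matrix with entries f̃₀(ζ_{M_0},…,ζ_{M_{N−1}} | ξ_{L_0},…,ξ_{L_{N−1}}) (rows indexed by ordered partitions M, columns by ordered partitions L, both in the same fixed order) equals ( ∏_{M} f₁(ζ_{M_0},…,ζ_{M_{N−1}}) · f₂(ξ_{M_0},…,ξ_{M_{N−1}}) ) · ( ∏_{M} ∏_{0≤r<l≤N−1} ∏_{a∈M_r, b∈M_l} (z_a − q² z_b)^{−1} (u_a − q² u_b)^{−1} ) · det( D(ζ|ξ|q)_{M,L} )_{M,L}. -/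
open scoped BigOperators

/-- The minimal ordered partition `M⁰` with `M⁰_r = {K_{r-1}+1,…,K_r}`, encoded as the
sequence assigning to position `a` its block. -/
def minSeq (N n : ℕ) (hN : 0 < N) (k : Fin N → ℕ) (a : Fin n) : Fin N :=
  ⟨(Finset.univ.filter fun r : Fin N => (∑ r' ∈ Finset.Iic r, k r') ≤ (a : ℕ)).card % N,
    Nat.mod_lt _ hN⟩

/-- `f̃₀(ζ|ξ)`. -/
noncomputable def ftilde0 (N n : ℕ) (hN : 0 < N) (k : Fin N → ℕ) (q : ℂ)
    (ζ ξ : Fin n → ℂ) : ℂ :=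
  (∏ a : Fin n, (ζ a / ξ a) ^ (-(((N : ℤ) - 1) * (a : ℤ))))
    * (∏ a : Fin n, (ξ a / ζ a) ^ ((minSeq N n hN k a : ℕ)))
    * (∏ a : Fin n, ∏ b : Fin n,
        if minSeq N n hN k a < minSeq N n hN k b then
          (ζ a ^ N - q * ξ b ^ N) * (ξ a ^ N - q * ζ b ^ N)
            / ((ζ a ^ N - q ^ 2 * ζ b ^ N) * (ξ a ^ N - q ^ 2 * ξ b ^ N))
        else 1)
    * ∑ i : Fin N,
        (∏ a : Fin n, (ζ a / ξ a) ^ (i : ℕ))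
          * ∏ a : Fin n,
              if (a : ℕ) < ∑ r : Fin N, (if r < i then k r else 0) then
                ξ a ^ N / ζ a ^ N
              else 1

/-- `f₁(ζ) = ∏_a ζ_a^{(N-1)(1-a)} ∏_r ∏_{a∈M⁰_r} ζ_a^{-r}`. -/
noncomputable def f1 (N n : ℕ) (hN : 0 < N) (k : Fin N → ℕ) (ζ : Fin n → ℂ) : ℂ :=
  (∏ a : Fin n, ζ a ^ (-(((N : ℤ) - 1) * (a : ℤ))))
    * ∏ a : Fin n, ζ a ^ (-((minSeq N n hN k a : ℕ) : ℤ))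

/-- `f₂(ξ) = f₁(ξ)⁻¹`. -/
noncomputable def f2 (N n : ℕ) (hN : 0 < N) (k : Fin N → ℕ) (ξ : Fin n → ℂ) : ℂ :=
  (f1 N n hN k ξ)⁻¹

section Comb

lemma dc_mem_iff {m : ℕ} {S : Finset (Fin m)}
    (hS : ∀ ⦃r' r : Fin m⦄, r' ≤ r → r ∈ S → r' ∈ S) {r : Fin m} :
    r ∈ S ↔ (r : ℕ) < S.card := by
  constructor
  · intro hr
    have h1 : Finset.Iic r ⊆ S := fun r' hr' => hS (Finset.mem_Iic.mp hr') hr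
    have := Finset.card_le_card h1
    rw [Fin.card_Iic] at this; omega
  · intro hr
    by_contra hmem
    have h1 : S ⊆ Finset.Iio r := by
      intro r' hr'
      rw [Finset.mem_Iio]
      by_contra hle
      exact hmem (hS (le_of_not_gt hle) hr')
    have := Finset.card_le_card h1
    rw [Fin.card_Iio] at this; omega

variable {N n : ℕ} (hN : 0 < N) (k : Fin N → ℕ)

lemma minSeq_val (hk : ∑ r : Fin N, k r = n) (a : Fin n) :
    (minSeq N n hN k a : ℕ)
      = (Finset.univ.filter fun r : Fin N => (∑ r' ∈ Finset.Iic r, k r') ≤ (a : ℕ)).card := by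
  set S := Finset.univ.filter fun r : Fin N => (∑ r' ∈ Finset.Iic r, k r') ≤ (a : ℕ) with hSdef
  have hscard : S.card < N := by
    obtain ⟨m, rfl⟩ : ∃ m, N = m + 1 := ⟨N - 1, by omega⟩
    have hlast : Fin.last m ∉ S := by
      simp only [hSdef, Finset.mem_filter, Finset.mem_univ, true_and, not_le]
      have : Finset.Iic (Fin.last m) = Finset.univ := by
        ext x; simp [Fin.le_last]
      rw [this, hk]
      exact a.isLt
    have : S ≠ Finset.univ := fun h => hlast (h ▸ Finset.mem_univ _)
    have := Finset.card_lt_card (Finset.ssubset_univ_iff.mpr this)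
    simpa using this
  simp only [minSeq, hSdef]
  exact Nat.mod_eq_of_lt hscard

lemma minSeq_le_iff (hk : ∑ r : Fin N, k r = n) (a : Fin n) (r : Fin N) :
    minSeq N n hN k a ≤ r ↔ (a : ℕ) < ∑ r' ∈ Finset.Iic r, k r' := by
  set S := Finset.univ.filter fun r : Fin N => (∑ r' ∈ Finset.Iic r, k r') ≤ (a : ℕ) with hSdef
  have hdc : ∀ ⦃r' r : Fin N⦄, r' ≤ r → r ∈ S → r' ∈ S := by
    intro r' r hle hr
    simp only [hSdef, Finset.mem_filter, Finset.mem_univ, true_and] at hr ⊢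
    refine le_trans (le_trans ?_ hr) le_rfl
    exact Finset.sum_le_sum_of_subset (Finset.Iic_subset_Iic.mpr hle)
  have hmem := @dc_mem_iff N S hdc r
  have hv := minSeq_val hN k hk a
  rw [← hSdef] at hv
  rw [Fin.le_def, hv]
  constructor
  · intro h
    have : r ∉ S := fun hr => by have := hmem.mp hr; omega
    simp only [hSdef, Finset.mem_filter, Finset.mem_univ, true_and, not_le] at this
    exact this
  · intro h
    have : r ∉ S := by
      simp only [hSdef, Finset.mem_filter, Finset.mem_univ, true_and, not_le]
      exact h
    by_contra hc
    exact this (hmem.mpr (by omega))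

lemma minSeq_mono (hk : ∑ r : Fin N, k r = n) : Monotone (minSeq N n hN k) := by
  intro a b hab
  rw [Fin.le_def, minSeq_val hN k hk, minSeq_val hN k hk]
  apply Finset.card_le_card
  intro r hr
  simp only [Finset.mem_filter, Finset.mem_univ, true_and] at hr ⊢
  have := Fin.le_def.mp hab; omega

end Comb

section Sorted
variable {N n : ℕ}

lemma monotone_le_iff_lt_card (f : Fin n → Fin N) (hf : Monotone f) (a : Fin n) (r : Fin N) :
    f a ≤ r ↔ (a : ℕ) < (Finset.univ.filter fun b => f b ≤ r).card := by
  have hdc : ∀ ⦃b' b : Fin n⦄, b' ≤ b →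
      b ∈ (Finset.univ.filter fun b => f b ≤ r) → b' ∈ (Finset.univ.filter fun b => f b ≤ r) := by
    intro b' b hle hb
    simp only [Finset.mem_filter, Finset.mem_univ, true_and] at hb ⊢
    exact le_trans (hf hle) hb
  have := @dc_mem_iff n _ hdc a
  simpa using this

lemma monotone_eq_of_card_le {f g : Fin n → Fin N} (hf : Monotone f) (hg : Monotone g)
    (h : ∀ r, (Finset.univ.filter fun a => f a ≤ r).card
        = (Finset.univ.filter fun a => g a ≤ r).card) : f = g := by
  funext a
  apply le_antisymm
  · rw [monotone_le_iff_lt_card f hf a (g a), h (g a),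
      ← monotone_le_iff_lt_card g hg a (g a)]
  · rw [monotone_le_iff_lt_card g hg a (f a), ← h (f a),
      ← monotone_le_iff_lt_card f hf a (f a)]

lemma card_filter_perm (σ : Equiv.Perm (Fin n)) (p : Fin n → Prop) [DecidablePred p] :
    (Finset.univ.filter fun a => p (σ a)).card = (Finset.univ.filter p).card := by
  apply Finset.card_bij' (fun a _ => σ a) (fun b _ => σ.symm b) <;>
    simp [Finset.mem_filter]

lemma card_val_lt (m : ℕ) (h : m ≤ n) :
    (Finset.univ.filter fun a : Fin n => (a : ℕ) < m).card = m := by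
  have key : (Finset.univ.filter fun a : Fin n => (a : ℕ) < m).card = (Finset.range m).card := by
    apply Finset.card_nbij (i := fun a : Fin n => (a : ℕ))
    · intro x hx; simpa using hx
    · intro x hx y hy hxy; exact Fin.ext hxy
    · intro x hx
      simp only [Finset.coe_filter, Finset.mem_range, Set.mem_image, Set.mem_setOf_eq,
        Finset.mem_univ, true_and, Finset.coe_range, Set.mem_Iio] at hx ⊢
      exact ⟨⟨x, by omega⟩, by simpa using hx, rfl⟩
  rw [key, Finset.card_range]

lemma card_filter_le_of_content {k : Fin N → ℕ} {M : Fin n → Fin N}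
    (hM : hasContent M k) (r : Fin N) :
    (Finset.univ.filter fun a => M a ≤ r).card = ∑ r' ∈ Finset.Iic r, k r' := by
  rw [Finset.card_eq_sum_card_fiberwise (f := M) (t := Finset.Iic r)
    (fun x hx => by simpa [Finset.mem_Iic] using (Finset.mem_filter.mp hx).2)]
  apply Finset.sum_congr rfl
  intro b hb
  rw [← hM b]
  congr 1
  ext x
  simp only [Finset.mem_filter, Finset.mem_univ, true_and]
  constructor
  · rintro ⟨-, h2⟩; exact h2
  · intro h; exact ⟨h ▸ Finset.mem_Iic.mp hb, h⟩

lemma sortedBlock (hN : 0 < N) (k : Fin N → ℕ) (hk : ∑ r : Fin N, k r = n)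
    {M : Fin n → Fin N} (hM : hasContent M k) :
    (fun a => M (Tuple.sort M a)) = minSeq N n hN k := by
  apply monotone_eq_of_card_le (f := fun a => M (Tuple.sort M a)) (g := minSeq N n hN k)
    (Tuple.monotone_sort M) (minSeq_mono hN k hk)
  intro r
  have h1 : (Finset.univ.filter fun a => M (Tuple.sort M a) ≤ r).card
      = ∑ r' ∈ Finset.Iic r, k r' := by
    rw [card_filter_perm (Tuple.sort M) (fun a => M a ≤ r)]
    exact card_filter_le_of_content hM r
  have h2 : (Finset.univ.filter fun a => minSeq N n hN k a ≤ r).card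
      = ∑ r' ∈ Finset.Iic r, k r' := by
    have : ∀ a : Fin n, (minSeq N n hN k a ≤ r) ↔ ((a : ℕ) < ∑ r' ∈ Finset.Iic r, k r') :=
      fun a => minSeq_le_iff hN k hk a r
    rw [Finset.filter_congr (fun a _ => this a)]
    apply card_val_lt
    rw [← hk]
    exact Finset.sum_le_sum_of_subset (Finset.subset_univ _)
  rw [h1, h2]

lemma minSeq_lt_iff (hN : 0 < N) (k : Fin N → ℕ) (hk : ∑ r : Fin N, k r = n)
    (a : Fin n) (i : Fin N) :
    minSeq N n hN k a < i ↔ (a : ℕ) < ∑ r : Fin N, (if r < i then k r else 0) := by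
  have hsum : ∑ r : Fin N, (if r < i then k r else 0) = ∑ r ∈ Finset.Iio i, k r := by
    rw [← Finset.sum_filter]
    congr 1
    ext x; simp
  rw [hsum]
  rcases Nat.eq_zero_or_pos (i : ℕ) with hi | hi
  · have h0 : ¬ (minSeq N n hN k a < i) := by
      rw [Fin.lt_def, hi]; omega
    have : Finset.Iio i = ∅ := by
      ext x; simp [Fin.lt_def, hi]
    simp [h0, this]
  · set i' : Fin N := ⟨(i : ℕ) - 1, by omega⟩ with hi'
    have hi'v : (i' : ℕ) = (i : ℕ) - 1 := rfl
    have hIio : Finset.Iio i = Finset.Iic i' := by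
      ext x; simp only [Finset.mem_Iio, Finset.mem_Iic, Fin.lt_def, Fin.le_def]
      omega
    have hlt : minSeq N n hN k a < i ↔ minSeq N n hN k a ≤ i' := by
      rw [Fin.lt_def, Fin.le_def]; omega
    rw [hIio, hlt]
    exact minSeq_le_iff hN k hk a i'

end Sorted

section Alg
variable {N n : ℕ}

lemma if_mul (c : Prop) [Decidable c] (x y : ℂ) :
    (if c then x * y else 1) = (if c then x else 1) * (if c then y else 1) := by
  split_ifs <;> simp

lemma prod_if_const {α : Type*} (c : Prop) [Decidable c] (s : Finset α) (G : α → ℂ) :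
    (∏ l ∈ s, if c then G l else 1) = if c then ∏ l ∈ s, G l else 1 := by
  split_ifs <;> simp

lemma prod_fiber_lt (M : Fin n → Fin N) (j : Fin N) (x : Fin n → ℂ) :
    (∏ r : Fin N, if r < j then (∏ a : Fin n, if M a = r then x a else 1) else 1)
      = ∏ a : Fin n, if M a < j then x a else 1 := by
  have step : ∀ r : Fin N, (if r < j then (∏ a : Fin n, if M a = r then x a else 1) else 1)
      = ∏ a : Fin n, if M a = r then (if r < j then x a else 1) else 1 := by
    intro r
    split_ifs with h
    · rfl
    · simp
  rw [Finset.prod_congr rfl (fun r _ => step r), Finset.prod_comm]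
  apply Finset.prod_congr rfl
  intro a _
  rw [Finset.prod_ite_eq]
  simp

lemma prod_block (M L : Fin n → Fin N) (F : Fin n → Fin n → ℂ) :
    (∏ r : Fin N, ∏ l : Fin N,
        if r < l then (∏ a : Fin n, ∏ b : Fin n, if M a = r ∧ L b = l then F a b else 1) else 1)
      = ∏ a : Fin n, ∏ b : Fin n, if M a < L b then F a b else 1 := by
  have step : ∀ r l : Fin N,
      (if r < l then (∏ a : Fin n, ∏ b : Fin n, if M a = r ∧ L b = l then F a b else 1) else 1)
        = ∏ a : Fin n, ∏ b : Fin n,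
            if M a = r then (if L b = l then (if r < l then F a b else 1) else 1) else 1 := by
    intro r l
    split_ifs with h
    · apply Finset.prod_congr rfl; intro a _; apply Finset.prod_congr rfl; intro b _
      by_cases h1 : M a = r <;> by_cases h2 : L b = l <;> simp [h1, h2, h]
    · simp [h]
  rw [Finset.prod_congr rfl (fun r _ => Finset.prod_congr rfl (fun l _ => step r l))]
  rw [Finset.prod_congr rfl (fun r _ => Finset.prod_comm), Finset.prod_comm]
  apply Finset.prod_congr rfl
  intro a _
  rw [Finset.prod_congr rfl (fun r _ => Finset.prod_comm), Finset.prod_comm]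
  apply Finset.prod_congr rfl
  intro b _
  rw [Finset.prod_congr rfl (fun r (_ : r ∈ Finset.univ) =>
    prod_if_const (M a = r) Finset.univ (fun l => if L b = l then (if r < l then F a b else 1) else 1)), Finset.prod_ite_eq]
  simp only [Finset.mem_univ, if_true]
  rw [Finset.prod_ite_eq]
  simp

end Alg

section EntryLemma
variable {N n : ℕ}

lemma entry (hN' : 0 < N) (k : Fin N → ℕ) (hk : ∑ r : Fin N, k r = n)
    (ζ ξ : Fin n → ℂ) (q : ℂ) {M L : Fin n → Fin N} (hM : hasContent M k) (hL : hasContent L k) :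
    ftilde0 N n hN' k q (fun t => ζ (Tuple.sort M t)) (fun t => ξ (Tuple.sort L t))
      = (f1 N n hN' k (fun t => ζ (Tuple.sort M t))
          * ∏ a : Fin n, ∏ b : Fin n, if M a < M b then (ζ a ^ N - q ^ 2 * ζ b ^ N)⁻¹ else 1)
        * (f2 N n hN' k (fun t => ξ (Tuple.sort L t))
          * ∏ a : Fin n, ∏ b : Fin n, if L a < L b then (ξ a ^ N - q ^ 2 * ξ b ^ N)⁻¹ else 1)
        * Dmat N n q ζ ξ M L := by
  have hMσ : ∀ a, M (Tuple.sort M a) = minSeq N n hN' k a :=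
    fun a => congrFun (sortedBlock hN' k hk hM) a
  have hLτ : ∀ a, L (Tuple.sort L a) = minSeq N n hN' k a :=
    fun a => congrFun (sortedBlock hN' k hk hL) a
  set σ := Tuple.sort M
  set τ := Tuple.sort L
  set blk := minSeq N n hN' k
  simp only [ftilde0, f1, f2, Dmat]
  -- abbreviations
  have reindex2 : ∀ (σ τ : Equiv.Perm (Fin n)) (f : Fin n → Fin n → ℂ),
      (∏ a : Fin n, ∏ b : Fin n, f (σ a) (τ b)) = ∏ a : Fin n, ∏ b : Fin n, f a b := by
    intro σ τ f
    rw [Finset.prod_congr rfl (fun a _ => Equiv.prod_comp τ (f (σ a)))]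
    exact Equiv.prod_comp σ (fun c => ∏ b : Fin n, f c b)
  have hA1 : (∏ x : Fin n, (ζ (σ x) / ξ (τ x)) ^ (-(((N : ℤ) - 1) * ((x : ℕ) : ℤ))))
      = (∏ x : Fin n, ζ (σ x) ^ (-(((N : ℤ) - 1) * ((x : ℕ) : ℤ))))
        * (∏ x : Fin n, ξ (τ x) ^ (-(((N : ℤ) - 1) * ((x : ℕ) : ℤ))))⁻¹ := by
    simp only [div_zpow]
    rw [Finset.prod_div_distrib, div_eq_mul_inv]
  have hA2 : (∏ x : Fin n, (ξ (τ x) / ζ (σ x)) ^ ((minSeq N n hN' k x : ℕ)))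
      = (∏ x : Fin n, ξ (τ x) ^ ((minSeq N n hN' k x : ℕ)))
        * (∏ x : Fin n, ζ (σ x) ^ ((minSeq N n hN' k x : ℕ)))⁻¹ := by
    simp only [div_pow]
    rw [Finset.prod_div_distrib, div_eq_mul_inv]
  have hf1snd : (∏ x : Fin n, ζ (σ x) ^ (-((minSeq N n hN' k x : ℕ) : ℤ)))
      = (∏ x : Fin n, ζ (σ x) ^ ((minSeq N n hN' k x : ℕ)))⁻¹ := by
    simp only [zpow_neg, zpow_natCast]
    rw [Finset.prod_inv_distrib]
  have hf2snd : (∏ x : Fin n, ξ (τ x) ^ (-((minSeq N n hN' k x : ℕ) : ℤ)))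
      = (∏ x : Fin n, ξ (τ x) ^ ((minSeq N n hN' k x : ℕ)))⁻¹ := by
    simp only [zpow_neg, zpow_natCast]
    rw [Finset.prod_inv_distrib]
  have hT1 : (∏ a : Fin n, ∏ b : Fin n,
        if minSeq N n hN' k a < minSeq N n hN' k b then ζ (σ a) ^ N - q * ξ (τ b) ^ N else 1)
      = ∏ a : Fin n, ∏ b : Fin n, if M a < L b then ζ a ^ N - q * ξ b ^ N else 1 := by
    have := reindex2 σ τ (fun c d => if M c < L d then ζ c ^ N - q * ξ d ^ N else 1)
    simp only [hMσ, hLτ] at this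
    exact this
  have hT2 : (∏ a : Fin n, ∏ b : Fin n,
        if minSeq N n hN' k a < minSeq N n hN' k b then ξ (τ a) ^ N - q * ζ (σ b) ^ N else 1)
      = ∏ a : Fin n, ∏ b : Fin n, if L a < M b then ξ a ^ N - q * ζ b ^ N else 1 := by
    have := reindex2 τ σ (fun c d => if L c < M d then ξ c ^ N - q * ζ d ^ N else 1)
    simp only [hMσ, hLτ] at this
    exact this
  have hT3 : (∏ a : Fin n, ∏ b : Fin n,
        if minSeq N n hN' k a < minSeq N n hN' k b then (ζ (σ a) ^ N - q ^ 2 * ζ (σ b) ^ N)⁻¹ else 1)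
      = ∏ a : Fin n, ∏ b : Fin n, if M a < M b then (ζ a ^ N - q ^ 2 * ζ b ^ N)⁻¹ else 1 := by
    have := reindex2 σ σ (fun c d => if M c < M d then (ζ c ^ N - q ^ 2 * ζ d ^ N)⁻¹ else 1)
    simp only [hMσ] at this
    exact this
  have hT4 : (∏ a : Fin n, ∏ b : Fin n,
        if minSeq N n hN' k a < minSeq N n hN' k b then (ξ (τ a) ^ N - q ^ 2 * ξ (τ b) ^ N)⁻¹ else 1)
      = ∏ a : Fin n, ∏ b : Fin n, if L a < L b then (ξ a ^ N - q ^ 2 * ξ b ^ N)⁻¹ else 1 := by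
    have := reindex2 τ τ (fun c d => if L c < L d then (ξ c ^ N - q ^ 2 * ξ d ^ N)⁻¹ else 1)
    simp only [hLτ] at this
    exact this
  have hA3 : (∏ a : Fin n, ∏ b : Fin n,
        if minSeq N n hN' k a < minSeq N n hN' k b then
          (ζ (σ a) ^ N - q * ξ (τ b) ^ N) * (ξ (τ a) ^ N - q * ζ (σ b) ^ N) /
            ((ζ (σ a) ^ N - q ^ 2 * ζ (σ b) ^ N) * (ξ (τ a) ^ N - q ^ 2 * ξ (τ b) ^ N))
        else 1)
      = ((∏ a : Fin n, ∏ b : Fin n, if M a < L b then ζ a ^ N - q * ξ b ^ N else 1)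
          * ∏ a : Fin n, ∏ b : Fin n, if L a < M b then ξ a ^ N - q * ζ b ^ N else 1)
        * ((∏ a : Fin n, ∏ b : Fin n, if M a < M b then (ζ a ^ N - q ^ 2 * ζ b ^ N)⁻¹ else 1)
          * ∏ a : Fin n, ∏ b : Fin n, if L a < L b then (ξ a ^ N - q ^ 2 * ξ b ^ N)⁻¹ else 1) := by
    have pt : ∀ (c : Prop) [Decidable c] (x1 x2 y1 y2 : ℂ),
        (if c then x1 * x2 / (y1 * y2) else 1)
          = ((if c then x1 else 1) * (if c then x2 else 1))
            * ((if c then y1⁻¹ else 1) * (if c then y2⁻¹ else 1)) := by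
      intro c _ x1 x2 y1 y2
      split_ifs with h
      · rw [div_eq_mul_inv, mul_inv]
      · simp
    rw [Finset.prod_congr rfl (fun a (_ : a ∈ Finset.univ) => Finset.prod_congr rfl
      (fun b (_ : b ∈ Finset.univ) => pt (minSeq N n hN' k a < minSeq N n hN' k b)
        (ζ (σ a) ^ N - q * ξ (τ b) ^ N) (ξ (τ a) ^ N - q * ζ (σ b) ^ N)
        (ζ (σ a) ^ N - q ^ 2 * ζ (σ b) ^ N) (ξ (τ a) ^ N - q ^ 2 * ξ (τ b) ^ N)))]
    simp only [Finset.prod_mul_distrib]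
    rw [hT1, hT2, hT3, hT4]
  have hsum : ∀ i : Fin N,
      (∏ x1 : Fin n, (ζ (σ x1) / ξ (τ x1)) ^ (i : ℕ))
          * (∏ x1 : Fin n,
              if (x1 : ℕ) < ∑ r : Fin N, (if r < i then k r else 0) then
                ξ (τ x1) ^ N / ζ (σ x1) ^ N else 1)
        = (∏ a : Fin n, (ζ a / ξ a) ^ (i : ℕ))
          * ∏ r : Fin N,
              (if r < i then
                (∏ a : Fin n, if M a = r then (ζ a ^ N)⁻¹ else 1)
                  * ∏ a : Fin n, if L a = r then ξ a ^ N else 1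
              else 1) := by
    intro i
    have e1 : (∏ x1 : Fin n, (ζ (σ x1) / ξ (τ x1)) ^ (i : ℕ))
        = ∏ a : Fin n, (ζ a / ξ a) ^ (i : ℕ) := by
      simp only [div_pow]
      rw [Finset.prod_div_distrib, Finset.prod_div_distrib,
        Equiv.prod_comp σ (fun c => ζ c ^ (i : ℕ)), Equiv.prod_comp τ (fun c => ξ c ^ (i : ℕ))]
    have e2 : (∏ x1 : Fin n,
          if (x1 : ℕ) < ∑ r : Fin N, (if r < i then k r else 0) then
            ξ (τ x1) ^ N / ζ (σ x1) ^ N else 1)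
        = (∏ a : Fin n, if M a < i then (ζ a ^ N)⁻¹ else 1)
          * ∏ a : Fin n, if L a < i then ξ a ^ N else 1 := by
      have hc : ∀ x1 : Fin n,
          (if (x1 : ℕ) < ∑ r : Fin N, (if r < i then k r else 0) then
            ξ (τ x1) ^ N / ζ (σ x1) ^ N else 1)
          = (if M (σ x1) < i then (ζ (σ x1) ^ N)⁻¹ else 1)
            * (if L (τ x1) < i then ξ (τ x1) ^ N else 1) := by
        intro x1
        rw [hMσ, hLτ]
        by_cases h : minSeq N n hN' k x1 < i
        · have h' : (x1 : ℕ) < ∑ r : Fin N, (if r < i then k r else 0) :=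
            (minSeq_lt_iff hN' k hk x1 i).mp h
          rw [if_pos h', if_pos h, if_pos h, div_eq_mul_inv]
          ring
        · have h' : ¬ ((x1 : ℕ) < ∑ r : Fin N, (if r < i then k r else 0)) :=
            fun hc => h ((minSeq_lt_iff hN' k hk x1 i).mpr hc)
          rw [if_neg h', if_neg h, if_neg h, one_mul]
      rw [Finset.prod_congr rfl (fun x1 _ => hc x1), Finset.prod_mul_distrib,
        Equiv.prod_comp σ (fun c => if M c < i then (ζ c ^ N)⁻¹ else 1),
        Equiv.prod_comp τ (fun c => if L c < i then ξ c ^ N else 1)]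
    have e3 : (∏ r : Fin N,
          (if r < i then
            (∏ a : Fin n, if M a = r then (ζ a ^ N)⁻¹ else 1)
              * ∏ a : Fin n, if L a = r then ξ a ^ N else 1
          else 1))
        = (∏ a : Fin n, if M a < i then (ζ a ^ N)⁻¹ else 1)
          * ∏ a : Fin n, if L a < i then ξ a ^ N else 1 := by
      rw [Finset.prod_congr rfl (fun r (_ : r ∈ Finset.univ) => if_mul (r < i)
        (∏ a : Fin n, if M a = r then (ζ a ^ N)⁻¹ else 1)
        (∏ a : Fin n, if L a = r then ξ a ^ N else 1)), Finset.prod_mul_distrib,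
        prod_fiber_lt M i (fun a => (ζ a ^ N)⁻¹), prod_fiber_lt L i (fun a => ξ a ^ N)]
    rw [e1, e2, e3]
  have hDfac : (∏ r : Fin N, ∏ l : Fin N,
        if r < l then
          (∏ a : Fin n, ∏ b : Fin n, if M a = r ∧ L b = l then ζ a ^ N - q * ξ b ^ N else 1)
            * ∏ a : Fin n, ∏ b : Fin n, if L a = r ∧ M b = l then ξ a ^ N - q * ζ b ^ N else 1
        else 1)
      = (∏ a : Fin n, ∏ b : Fin n, if M a < L b then ζ a ^ N - q * ξ b ^ N else 1)
        * ∏ a : Fin n, ∏ b : Fin n, if L a < M b then ξ a ^ N - q * ζ b ^ N else 1 := by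
    rw [Finset.prod_congr rfl (fun r (_ : r ∈ Finset.univ) => Finset.prod_congr rfl
      (fun l (_ : l ∈ Finset.univ) => if_mul (r < l)
        (∏ a : Fin n, ∏ b : Fin n, if M a = r ∧ L b = l then ζ a ^ N - q * ξ b ^ N else 1)
        (∏ a : Fin n, ∏ b : Fin n, if L a = r ∧ M b = l then ξ a ^ N - q * ζ b ^ N else 1)))]
    simp only [Finset.prod_mul_distrib]
    rw [prod_block M L (fun a b => ζ a ^ N - q * ξ b ^ N),
      prod_block L M (fun a b => ξ a ^ N - q * ζ b ^ N)]
  rw [hA1, hA2, hA3, hf1snd, hf2snd, hDfac, Finset.sum_congr rfl (fun i _ => hsum i)]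
  rw [mul_inv, inv_inv]
  ring

end EntryLemma

/-- determinant factorization of the matrix of extremal components
`f̃₀(ζ_{M_0},…,ζ_{M_{N-1}}|ξ_{L_0},…,ξ_{L_{N-1}})`, where the permuted tuple for an
ordered partition encoded by `M : Fin n → Fin N` is `ζ ∘ Tuple.sort M` (stable sort by
block, ties broken by position). -/
theorem ftilde0_det_factorization (N n : ℕ) (hN : 2 ≤ N) (hn : 1 ≤ n)
    (k : Fin N → ℕ) (hk : ∑ r : Fin N, k r = n)
    (ζ ξ : Fin n → ℂ) (q : ℂ)
    (hζ : ∀ a, ζ a ≠ 0) (hξ : ∀ a, ξ a ≠ 0) (hq : q ≠ 0)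
    (hz : ∀ a b : Fin n, a ≠ b → ζ a ^ N - q ^ 2 * ζ b ^ N ≠ 0)
    (hu : ∀ a b : Fin n, a ≠ b → ξ a ^ N - q ^ 2 * ξ b ^ N ≠ 0) :
    Matrix.det
        (Matrix.of fun Mp Lp : {M : Fin n → Fin N // hasContent M k} =>
          ftilde0 N n (by omega) k q
            (fun t => ζ (Tuple.sort Mp.1 t)) (fun t => ξ (Tuple.sort Lp.1 t)))
      = (∏ Mp : {M : Fin n → Fin N // hasContent M k},
            f1 N n (by omega) k (fun t => ζ (Tuple.sort Mp.1 t))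
              * f2 N n (by omega) k (fun t => ξ (Tuple.sort Mp.1 t)))
        * (∏ Mp : {M : Fin n → Fin N // hasContent M k},
            ∏ a : Fin n, ∏ b : Fin n,
              if Mp.1 a < Mp.1 b then
                (ζ a ^ N - q ^ 2 * ζ b ^ N)⁻¹ * (ξ a ^ N - q ^ 2 * ξ b ^ N)⁻¹
              else 1)
        * Matrix.det
            (Matrix.of fun Mp Lp : {M : Fin n → Fin N // hasContent M k} =>
              Dmat N n q ζ ξ Mp.1 Lp.1) := by
  have hN' : 0 < N := by omega
  set ι := {M : Fin n → Fin N // hasContent M k} with hι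
  set v : ι → ℂ := fun Mp =>
    f1 N n hN' k (fun t => ζ (Tuple.sort Mp.1 t))
      * ∏ a : Fin n, ∏ b : Fin n, if Mp.1 a < Mp.1 b then (ζ a ^ N - q ^ 2 * ζ b ^ N)⁻¹ else 1
    with hv
  set w : ι → ℂ := fun Lp =>
    f2 N n hN' k (fun t => ξ (Tuple.sort Lp.1 t))
      * ∏ a : Fin n, ∏ b : Fin n, if Lp.1 a < Lp.1 b then (ξ a ^ N - q ^ 2 * ξ b ^ N)⁻¹ else 1
    with hw
  set D : Matrix ι ι ℂ := Matrix.of fun Mp Lp : ι => Dmat N n q ζ ξ Mp.1 Lp.1 with hD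
  have step1 : (Matrix.of fun Mp Lp : ι =>
      ftilde0 N n (by omega : 0 < N) k q
        (fun t => ζ (Tuple.sort Mp.1 t)) (fun t => ξ (Tuple.sort Lp.1 t)))
      = Matrix.of fun Mp Lp : ι => v Mp * ((Matrix.of fun Mp Lp : ι => w Lp * D Mp Lp) Mp Lp) := by
    ext Mp Lp
    simp only [Matrix.of_apply, hv, hw, hD]
    rw [entry hN' k hk ζ ξ q Mp.2 Lp.2]
    ring
  rw [step1, Matrix.det_mul_column v _, Matrix.det_mul_row w D]
  have hprod : ∀ (f g : ι → ℂ), (∏ Mp : ι, f Mp * g Mp) = (∏ Mp : ι, f Mp) * ∏ Mp : ι, g Mp :=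
    fun f g => Finset.prod_mul_distrib
  rw [hprod, hprod, hprod]
  simp only [if_mul, Finset.prod_mul_distrib]
  ring
end
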